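/- arXiv:2401.01215 — 4 statements merged into one kernel-verified Lean document; each statement's English description precedes it below -/
import Mathlib

section
/- Let {n₁, ν₁, s₁, s₂} and {n₂, ν₂, s₁, s₂} be orthonormal bases of ℝ⁴ sharing s₁, s₂, with n₁·n₂ = -ν₁·ν₂. Let n ∈ ℝ⁴ be a unit vector and ε ≥ 0 be such that ‖n - n₁‖ ≤ ε and ‖n - n₂‖ ≤ ε. Then with P = I - nnᵀ the orthogonal projection onto n^⊥, there is an absolute constant C with ‖P(ν₁ + ν₂)‖ ≤ C ε². -/
set_option maxHeartbeats 1000000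


open RealInnerProductSpace

private lemma proj_contract {E : Type*} [NormedAddCommGroup E] [InnerProductSpace ℝ E]
    (n x : E) (hn : ‖n‖ = 1) : ‖x - ⟪n, x⟫ • n‖ ≤ ‖x‖ := by
  have h : ‖x - ⟪n, x⟫ • n‖ ^ 2 = ‖x‖ ^ 2 - ⟪n, x⟫ ^ 2 := by
    rw [norm_sub_sq_real, real_inner_smul_right, norm_smul, real_inner_comm x n]
    simp [hn]
    ring
  nlinarith [norm_nonneg (x - ⟪n, x⟫ • n), norm_nonneg x]

/-- Improved conormal jump estimate: the tangential part of the conormal jump `ν₁ + ν₂`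
is quadratically small in the normal approximation error `ε`. -/
theorem tangential_conormal_jump_quadratic :
    ∃ C : ℝ, 0 < C ∧
      ∀ (n₁ ν₁ s₁ s₂ n₂ ν₂ n : EuclideanSpace ℝ (Fin 4)) (ε : ℝ),
        (∀ i j, ⟪![n₁, ν₁, s₁, s₂] i, ![n₁, ν₁, s₁, s₂] j⟫ = if i = j then (1 : ℝ) else 0) →
        (∀ i j, ⟪![n₂, ν₂, s₁, s₂] i, ![n₂, ν₂, s₁, s₂] j⟫ = if i = j then (1 : ℝ) else 0) →
        ⟪n₁, n₂⟫ = -⟪ν₁, ν₂⟫ →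
        ‖n‖ = 1 → 0 ≤ ε → ε ≤ 1 → ‖n - n₁‖ ≤ ε → ‖n - n₂‖ ≤ ε →
        ‖(ν₁ + ν₂) - ⟪n, ν₁ + ν₂⟫ • n‖ ≤ C * ε ^ 2 := by
  refine ⟨4, by norm_num, ?_⟩
  intro n₁ ν₁ s₁ s₂ n₂ ν₂ n ε h₁ h₂ hmix hn hε _ hn1 hn2
  -- extract scalar identities
  have e11 : ⟪n₁, n₁⟫ = (1 : ℝ) := by simpa using h₁ 0 0
  have e1ν : ⟪n₁, ν₁⟫ = (0 : ℝ) := by simpa using h₁ 0 1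
  have eνν : ⟪ν₁, ν₁⟫ = (1 : ℝ) := by simpa using h₁ 1 1
  have es1ν : ⟪s₁, ν₁⟫ = (0 : ℝ) := by simpa using h₁ 2 1
  have es2ν : ⟪s₂, ν₁⟫ = (0 : ℝ) := by simpa using h₁ 3 1
  have e22 : ⟪n₂, n₂⟫ = (1 : ℝ) := by simpa using h₂ 0 0
  have eν2ν2 : ⟪ν₂, ν₂⟫ = (1 : ℝ) := by simpa using h₂ 1 1
  have es1ν2 : ⟪s₁, ν₂⟫ = (0 : ℝ) := by simpa using h₂ 2 1
  have es2ν2 : ⟪s₂, ν₂⟫ = (0 : ℝ) := by simpa using h₂ 3 1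
  set β : ℝ := ⟪n₁, ν₂⟫ with hβ
  set γ : ℝ := 1 + ⟪ν₁, ν₂⟫ with hγ
  set v : EuclideanSpace ℝ (Fin 4) := ν₁ + ν₂ with hv
  -- v = β • n₁ + γ • ν₁ via the orthonormal basis
  have hon : Orthonormal ℝ ![n₁, ν₁, s₁, s₂] := orthonormal_iff_ite.mpr h₁
  have hspan := hon.linearIndependent.span_eq_top_of_card_eq_finrank (by simp)
  let b : OrthonormalBasis (Fin 4) ℝ (EuclideanSpace ℝ (Fin 4)) :=
    OrthonormalBasis.mk hon hspan.ge
  have hb : ∀ i, b i = ![n₁, ν₁, s₁, s₂] i := fun i => by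
    simp [b, OrthonormalBasis.coe_mk]
  have hrep : v = β • n₁ + γ • ν₁ := by
    have := (b.sum_repr' v).symm
    rw [Fin.sum_univ_four] at this
    simp only [hb] at this
    simp only [Matrix.cons_val_zero, Matrix.cons_val_one, Matrix.head_cons,
      Matrix.cons_val_two, Matrix.tail_cons, Matrix.cons_val_three] at this
    rw [this, hv]
    rw [inner_add_right, inner_add_right, inner_add_right, inner_add_right,
      e1ν, es1ν, es2ν, es1ν2, es2ν2, eνν]
    simp [hβ, hγ]
  -- norms of the unit vectors
  have nn1 : ‖n₁‖ = 1 := by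
    rw [← Real.sqrt_one, ← e11, real_inner_self_eq_norm_sq]
    simp [Real.sqrt_sq (norm_nonneg n₁)]
  have nn2 : ‖n₂‖ = 1 := by
    rw [← Real.sqrt_one, ← e22, real_inner_self_eq_norm_sq]
    simp [Real.sqrt_sq (norm_nonneg n₂)]
  -- γ bound
  have hdist : ‖n₁ - n₂‖ ≤ 2 * ε := by
    calc ‖n₁ - n₂‖ = ‖(n₁ - n) + (n - n₂)‖ := by abel_nf
    _ ≤ ‖n₁ - n‖ + ‖n - n₂‖ := norm_add_le _ _
    _ ≤ ε + ε := by rw [norm_sub_rev]; exact add_le_add hn1 hn2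
    _ = 2 * ε := by ring
  have hd2 : ‖n₁ - n₂‖ ^ 2 = 2 - 2 * ⟪n₁, n₂⟫ := by
    rw [norm_sub_sq_real, nn1, nn2]; ring
  have hγval : γ = 1 - ⟪n₁, n₂⟫ := by rw [hγ, ← neg_eq_iff_eq_neg.mpr hmix]; ring
  have hγ0 : 0 ≤ γ := by nlinarith [sq_nonneg ‖n₁ - n₂‖]
  have hγle : γ ≤ 2 * ε ^ 2 := by nlinarith [norm_nonneg (n₁ - n₂)]
  -- β bound
  have hvsq : ‖v‖ ^ 2 = 2 * γ := by
    rw [hv, norm_add_sq_real, ← real_inner_self_eq_norm_sq, ← real_inner_self_eq_norm_sq,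
      eνν, eν2ν2, hγ]
    ring
  have hβle : |β| ≤ 2 * ε := by
    have hcs : |β| ≤ ‖n₁‖ * ‖ν₂‖ := abs_real_inner_le_norm n₁ ν₂
    have hβv : β = ⟪n₁, v⟫ := by rw [hv, inner_add_right, e1ν]; ring
    have hcs2 : |β| ≤ ‖v‖ := by
      rw [hβv]
      simpa [nn1] using abs_real_inner_le_norm n₁ v
    nlinarith [abs_nonneg β, norm_nonneg v]
  -- projection bounds
  have hPν : ‖ν₁ - ⟪n, ν₁⟫ • n‖ ≤ 1 := by
    have := proj_contract n ν₁ hn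
    have nν : ‖ν₁‖ = 1 := by
      rw [← Real.sqrt_one, ← eνν, real_inner_self_eq_norm_sq]
      simp [Real.sqrt_sq (norm_nonneg ν₁)]
    rwa [nν] at this
  have hPn1 : ‖n₁ - ⟪n, n₁⟫ • n‖ ≤ ε := by
    have key : n₁ - ⟪n, n₁⟫ • n = (n₁ - n) - ⟪n, n₁ - n⟫ • n := by
      rw [inner_sub_right, real_inner_self_eq_norm_sq, hn]
      simp only [one_pow, sub_smul, one_smul]
      abel
    rw [key]
    calc ‖(n₁ - n) - ⟪n, n₁ - n⟫ • n‖ ≤ ‖n₁ - n‖ := proj_contract n (n₁ - n) hn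
    _ ≤ ε := by rwa [norm_sub_rev]
  -- split the projection of v
  have hsplit : v - ⟪n, v⟫ • n = β • (n₁ - ⟪n, n₁⟫ • n) + γ • (ν₁ - ⟪n, ν₁⟫ • n) := by
    rw [hrep, inner_add_right, real_inner_smul_right, real_inner_smul_right]
    module
  calc ‖v - ⟪n, v⟫ • n‖
      = ‖β • (n₁ - ⟪n, n₁⟫ • n) + γ • (ν₁ - ⟪n, ν₁⟫ • n)‖ := by rw [hsplit]
    _ ≤ ‖β • (n₁ - ⟪n, n₁⟫ • n)‖ + ‖γ • (ν₁ - ⟪n, ν₁⟫ • n)‖ := norm_add_le _ _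
    _ = |β| * ‖n₁ - ⟪n, n₁⟫ • n‖ + |γ| * ‖ν₁ - ⟪n, ν₁⟫ • n‖ := by
        rw [norm_smul, norm_smul, Real.norm_eq_abs, Real.norm_eq_abs]
    _ ≤ (2 * ε) * ε + (2 * ε ^ 2) * 1 := by
        apply add_le_add
        · exact mul_le_mul hβle hPn1 (norm_nonneg _) (by positivity)
        · rw [abs_of_nonneg hγ0]
          exact mul_le_mul hγle hPν (norm_nonneg _) (by positivity)
    _ = 4 * ε ^ 2 := by ring
end

section
/- Let {n₁, ν₁, s₁, s₂} and {n₂, ν₂, s₁, s₂} be orthonormal bases of ℝ⁴ sharing s₁, s₂, with n₁·n₂ = -ν₁·ν₂. Let n be a unit vector with ‖n - n₁‖ ≤ ε and ‖n - n₂‖ ≤ ε. Then ‖ν₁ + ν₂‖ ≤ 2ε. -/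
open RealInnerProductSpace

/-- Conormal jump estimate: `‖ν₁ + ν₂‖ ≤ 2ε`. -/
theorem conormal_jump_le (n₁ ν₁ s₁ s₂ n₂ ν₂ n : EuclideanSpace ℝ (Fin 4)) (ε : ℝ)
    (h1 : ∀ i j, ⟪![n₁, ν₁, s₁, s₂] i, ![n₁, ν₁, s₁, s₂] j⟫ = if i = j then (1 : ℝ) else 0)
    (h2 : ∀ i j, ⟪![n₂, ν₂, s₁, s₂] i, ![n₂, ν₂, s₁, s₂] j⟫ = if i = j then (1 : ℝ) else 0)
    (hangle : ⟪n₁, n₂⟫ = -⟪ν₁, ν₂⟫)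
    (hn : ‖n‖ = 1) (h₁ : ‖n - n₁‖ ≤ ε) (h₂ : ‖n - n₂‖ ≤ ε) :
    ‖ν₁ + ν₂‖ ≤ 2 * ε := by
  have hn1 : ⟪n₁, n₁⟫ = (1 : ℝ) := by simpa using h1 0 0
  have hn2 : ⟪n₂, n₂⟫ = (1 : ℝ) := by simpa using h2 0 0
  have hv1 : ⟪ν₁, ν₁⟫ = (1 : ℝ) := by simpa using h1 1 1
  have hv2 : ⟪ν₂, ν₂⟫ = (1 : ℝ) := by simpa using h2 1 1
  have hsq : ‖ν₁ + ν₂‖ ^ 2 = ‖n₁ - n₂‖ ^ 2 := by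
    rw [← real_inner_self_eq_norm_sq, ← real_inner_self_eq_norm_sq,
      inner_add_add_self, inner_sub_sub_self, hn1, hn2, hv1, hv2]
    linarith [real_inner_comm ν₂ ν₁, real_inner_comm n₂ n₁, hangle]
  have heq : ‖ν₁ + ν₂‖ = ‖n₁ - n₂‖ := by
    rw [← abs_norm (ν₁ + ν₂), ← abs_norm (n₁ - n₂), ← Real.sqrt_sq_eq_abs,
      ← Real.sqrt_sq_eq_abs, hsq]
  calc ‖ν₁ + ν₂‖ = ‖n₁ - n₂‖ := heq
    _ ≤ ‖n₁ - n‖ + ‖n - n₂‖ := norm_sub_le_norm_sub_add_norm_sub _ _ _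
    _ ≤ ε + ε := by
        have : ‖n₁ - n‖ = ‖n - n₁‖ := norm_sub_rev _ _
        linarith
    _ = 2 * ε := by ring
end

section
/- Let n ∈ ℝ³ be a unit vector, V ∈ ℝ, H ∈ ℝ^{3×3} a symmetric matrix with Hn = 0, δ ∈ ℝ, m ∈ ℝ³ with n·m = 0, and α² = 1+V². Then the 4×4 block matrix D̃ = [[I - δH, -V n],[-δ mᵀ, α²]] has determinant det(D̃) = α² det(I - δH). -/
open Matrix

/-- `det D̃ = α² det(I - δH)` for the block matrix `D̃ = [[I-δH, -Vn],[-δmᵀ, α²]]`. -/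
theorem det_Dtilde (n m : Fin 3 → ℝ) (V δ α : ℝ) (H : Matrix (Fin 3) (Fin 3) ℝ)
    (hn : n ⬝ᵥ n = 1) (hH : H.IsSymm) (hHn : H.mulVec n = 0)
    (hm : n ⬝ᵥ m = 0) (hα : α ^ 2 = 1 + V ^ 2) :
    (Matrix.fromBlocks ((1 : Matrix (Fin 3) (Fin 3) ℝ) - δ • H)
        (Matrix.of fun i (_ : Unit) => -V * n i)
        (Matrix.of fun (_ : Unit) j => -δ * m j)
        (Matrix.of fun (_ : Unit) (_ : Unit) => α ^ 2)).det =
      α ^ 2 * ((1 : Matrix (Fin 3) (Fin 3) ℝ) - δ • H).det := by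
  set A : Matrix (Fin 3) (Fin 3) ℝ := (1 : Matrix (Fin 3) (Fin 3) ℝ) - δ • H with hA
  have hAn : A.mulVec n = n := by
    simp [hA, Matrix.sub_mulVec, Matrix.smul_mulVec, hHn]
  have e1 : A * (1 : Matrix (Fin 3) (Fin 3) ℝ) +
      (Matrix.of fun i (_ : Unit) => -V * n i) * (0 : Matrix Unit (Fin 3) ℝ) = A := by simp
  have e2 : A * (Matrix.of fun i (_ : Unit) => V * n i) +
      (Matrix.of fun i (_ : Unit) => -V * n i) * (1 : Matrix Unit Unit ℝ) = 0 := by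
    rw [Matrix.mul_one]
    ext i u
    have h1 := congrFun hAn i
    simp [Matrix.mulVec, dotProduct] at h1
    simp only [Matrix.add_apply, Matrix.mul_apply, Matrix.of_apply, Matrix.zero_apply]
    have h3 : (∑ j, A i j * (V * n j)) = V * n i := by
      rw [← h1, Finset.mul_sum]
      apply Finset.sum_congr rfl; intros; ring
    rw [h3]; ring
  have e3 : (Matrix.of fun (_ : Unit) j => -δ * m j) * (1 : Matrix (Fin 3) (Fin 3) ℝ) +
      (Matrix.of fun (_ : Unit) (_ : Unit) => α ^ 2) * (0 : Matrix Unit (Fin 3) ℝ) =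
      (Matrix.of fun (_ : Unit) j => -δ * m j) := by simp
  have e4 : (Matrix.of fun (_ : Unit) j => -δ * m j) *
      (Matrix.of fun i (_ : Unit) => V * n i) +
      (Matrix.of fun (_ : Unit) (_ : Unit) => α ^ 2) * (1 : Matrix Unit Unit ℝ) =
      (Matrix.of fun (_ : Unit) (_ : Unit) => α ^ 2) := by
    rw [Matrix.mul_one]
    ext u v
    simp only [Matrix.add_apply, Matrix.mul_apply, Matrix.of_apply]
    have h2 : (∑ j, (-δ * m j) * (V * n j)) = -δ * V * (n ⬝ᵥ m) := by
      simp only [dotProduct, Finset.mul_sum]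
      apply Finset.sum_congr rfl; intros; ring
    rw [h2, hm]; ring
  have key : (Matrix.fromBlocks A
        (Matrix.of fun i (_ : Unit) => -V * n i)
        (Matrix.of fun (_ : Unit) j => -δ * m j)
        (Matrix.of fun (_ : Unit) (_ : Unit) => α ^ 2)) *
      (Matrix.fromBlocks 1 (Matrix.of fun i (_ : Unit) => V * n i) 0 1) =
      Matrix.fromBlocks A 0 (Matrix.of fun (_ : Unit) j => -δ * m j)
        (Matrix.of fun (_ : Unit) (_ : Unit) => α ^ 2) := by
    rw [Matrix.fromBlocks_multiply, e1, e2, e3, e4]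
  have hdet := congrArg Matrix.det key
  rw [Matrix.det_mul, Matrix.det_fromBlocks_zero₂₁, Matrix.det_fromBlocks_zero₁₂] at hdet
  simp [Matrix.det_unique] at hdet
  simp only [neg_mul]
  rw [hdet]; ring
end

section
/- Let n ∈ ℝ³ be a unit vector, H ∈ ℝ^{3×3} symmetric with Hn = 0 and eigenvalues κ₁, κ₂, 0, let δ, δ_t ∈ ℝ and m ∈ ℝ³ with n·m = 0. Then det of the 4×4 matrix [[I - δH, -δ m],[δ_t nᵀ, 1 + δ_t²]] equals (1+δ_t²)(1-δκ₁)(1-δκ₂). -/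
open Matrix

/-- Determinant computation from the surface-measure lemma:
`det [[I-δH, -δm],[δ_t nᵀ, 1+δ_t²]] = (1+δ_t²)(1-δκ₁)(1-δκ₂)` where `H` is symmetric with
orthonormal eigenvectors `v₁, v₂, n` and eigenvalues `κ₁, κ₂, 0`, and `n·m = 0`. -/
theorem det_block_weingarten (n m v₁ v₂ : Fin 3 → ℝ) (κ₁ κ₂ δ δt : ℝ)
    (H : Matrix (Fin 3) (Fin 3) ℝ) (hH : H.IsSymm)
    (hortho : ∀ i j, (![v₁, v₂, n] i) ⬝ᵥ (![v₁, v₂, n] j) = if i = j then (1 : ℝ) else 0)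
    (hv₁ : H.mulVec v₁ = κ₁ • v₁) (hv₂ : H.mulVec v₂ = κ₂ • v₂)
    (hHn : H.mulVec n = 0) (hm : n ⬝ᵥ m = 0) :
    (Matrix.fromBlocks ((1 : Matrix (Fin 3) (Fin 3) ℝ) - δ • H)
        (Matrix.of fun i (_ : Unit) => -δ * m i)
        (Matrix.of fun (_ : Unit) j => δt * n j)
        (Matrix.of fun (_ : Unit) (_ : Unit) => 1 + δt ^ 2)).det =
      (1 + δt ^ 2) * (1 - δ * κ₁) * (1 - δ * κ₂) := by
  classical
  set A : Matrix (Fin 3) (Fin 3) ℝ := (1 : Matrix (Fin 3) (Fin 3) ℝ) - δ • H with hA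
  set B : Matrix (Fin 3) Unit ℝ := Matrix.of fun i (_ : Unit) => -δ * m i with hB
  set C : Matrix Unit (Fin 3) ℝ := Matrix.of fun (_ : Unit) j => δt * n j with hC
  set D : Matrix Unit Unit ℝ := Matrix.of fun (_ : Unit) (_ : Unit) => 1 + δt ^ 2 with hD
  set w : Fin 3 → (Fin 3 → ℝ) := ![v₁, v₂, n] with hw'
  set κ : Fin 3 → ℝ := ![κ₁, κ₂, 0] with hκ'
  set P : Matrix (Fin 3) (Fin 3) ℝ := Matrix.of w with hP
  have hw : ∀ j, H.mulVec (w j) = κ j • w j := by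
    intro j
    fin_cases j <;> simp [hw', hκ', hv₁, hv₂, hHn]
  -- P is orthogonal
  have hPPt : P * Pᵀ = 1 := by
    ext i j
    rw [show (P * Pᵀ) i j = w i ⬝ᵥ w j from rfl, hortho i j, Matrix.one_apply]
  have hdetP : P.det * Pᵀ.det = 1 := by
    rw [← Matrix.det_mul, hPPt, Matrix.det_one]
  -- conjugation diagonalizes H
  have hPHPt : P * H * Pᵀ = Matrix.diagonal κ := by
    rw [Matrix.mul_assoc]
    ext i j
    rw [show (P * (H * Pᵀ)) i j = w i ⬝ᵥ (H.mulVec (w j)) from rfl, hw j,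
      dotProduct_smul, hortho i j, Matrix.diagonal_apply]
    rcases eq_or_ne i j with h | h <;> simp [h]
  have hPAPt : P * A * Pᵀ = 1 - δ • Matrix.diagonal κ := by
    rw [hA, Matrix.mul_sub, Matrix.sub_mul, Matrix.mul_one, hPPt,
      Matrix.mul_smul, Matrix.smul_mul, hPHPt]
  -- conjugate the block matrix by Q = fromBlocks P 0 0 1
  have hconj : (Matrix.fromBlocks A B C D).det
      = (Matrix.fromBlocks (P * A * Pᵀ) (P * B) (C * Pᵀ) D).det := by
    have h1 : Matrix.fromBlocks (P * A * Pᵀ) (P * B) (C * Pᵀ) D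
        = Matrix.fromBlocks P 0 0 (1 : Matrix Unit Unit ℝ) * Matrix.fromBlocks A B C D
          * Matrix.fromBlocks Pᵀ 0 0 (1 : Matrix Unit Unit ℝ) := by
      rw [Matrix.fromBlocks_multiply, Matrix.fromBlocks_multiply]
      simp [Matrix.mul_assoc]
    rw [h1, Matrix.det_mul, Matrix.det_mul,
      Matrix.det_fromBlocks_zero₂₁, Matrix.det_fromBlocks_zero₂₁]
    simp only [Matrix.det_one, mul_one, one_mul]
    rw [mul_comm P.det, mul_assoc, hdetP, mul_one]
  rw [hconj]
  -- D is invertible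
  have hDdet : D.det = 1 + δt ^ 2 := by simp [hD, Matrix.det_unique]
  have hDpos : (0:ℝ) < 1 + δt ^ 2 := by positivity
  haveI : Invertible D.det := by
    rw [hDdet]; exact invertibleOfNonzero (ne_of_gt hDpos)
  haveI : Invertible D := D.invertibleOfDetInvertible
  rw [Matrix.det_fromBlocks₂₂, hDdet]
  -- the Schur complement is upper triangular
  set G : Matrix (Fin 3) (Fin 3) ℝ := P * B * ⅟D * (C * Pᵀ) with hGdef
  set E : Matrix (Fin 3) (Fin 3) ℝ := P * A * Pᵀ - G with hE
  have hCPt : ∀ j : Fin 3, (C * Pᵀ) () j = δt * (if (2 : Fin 3) = j then 1 else 0) := by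
    intro j
    rw [show (C * Pᵀ) () j = (δt • n) ⬝ᵥ w j from rfl, smul_dotProduct,
      show n ⬝ᵥ w j = if (2 : Fin 3) = j then (1:ℝ) else 0 from hortho 2 j, smul_eq_mul]
  have hPB2 : (P * B) 2 () = 0 := by
    rw [show (P * B) 2 () = n ⬝ᵥ ((-δ) • m) from rfl, dotProduct_smul, hm, smul_zero]
  have hG : ∀ i j, G i j = (P * B) i () * (⅟D) () () * (C * Pᵀ) () j := by
    intro i j
    rw [hGdef, Matrix.mul_apply, Fintype.sum_unique, Matrix.mul_apply, Fintype.sum_unique]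
  have hGcol : ∀ i, ∀ j : Fin 3, (2:Fin 3) ≠ j → G i j = 0 := by
    intro i j hj
    rw [hG, hCPt j, if_neg hj]
    ring
  have hG22 : G 2 2 = 0 := by
    rw [hG, hPB2]; ring
  have hEapp : ∀ i j, E i j
      = ((1 : Matrix (Fin 3) (Fin 3) ℝ) - δ • Matrix.diagonal κ) i j - G i j := by
    intro i j
    rw [hE, Matrix.sub_apply, hPAPt]
  have h00 : E 0 0 = 1 - δ * κ₁ := by
    rw [hEapp, hGcol 0 0 (by decide)]
    simp [Matrix.sub_apply, Matrix.smul_apply, Matrix.one_apply, Matrix.diagonal_apply, hκ']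
  have h11 : E 1 1 = 1 - δ * κ₂ := by
    rw [hEapp, hGcol 1 1 (by decide)]
    simp [Matrix.sub_apply, Matrix.smul_apply, Matrix.one_apply, Matrix.diagonal_apply, hκ']
  have h22 : E 2 2 = 1 := by
    rw [hEapp, hG22]
    simp [Matrix.sub_apply, Matrix.smul_apply, Matrix.one_apply, Matrix.diagonal_apply, hκ']
  have h01 : E 0 1 = 0 := by
    rw [hEapp, hGcol 0 1 (by decide)]
    simp [Matrix.sub_apply, Matrix.smul_apply, Matrix.one_apply, Matrix.diagonal_apply]
  have h10 : E 1 0 = 0 := by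
    rw [hEapp, hGcol 1 0 (by decide)]
    simp [Matrix.sub_apply, Matrix.smul_apply, Matrix.one_apply, Matrix.diagonal_apply]
  have h20 : E 2 0 = 0 := by
    rw [hEapp, hGcol 2 0 (by decide)]
    simp [Matrix.sub_apply, Matrix.smul_apply, Matrix.one_apply, Matrix.diagonal_apply]
  have h21 : E 2 1 = 0 := by
    rw [hEapp, hGcol 2 1 (by decide)]
    simp [Matrix.sub_apply, Matrix.smul_apply, Matrix.one_apply, Matrix.diagonal_apply]
  rw [Matrix.det_fin_three, h00, h11, h22, h01, h10, h20, h21]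
  ring
end
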